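/- arXiv:1811.08602 — 2 statements merged into one kernel-verified Lean document; each statement's English description precedes it below -/
import Mathlib

section
/- Let a ∈ (0,1) and c > 0. Then the infimum of x + y + z over all nonnegative reals x, y, z satisfying 4a·x + 3(1−a)·(y+z) ≥ c and x ≥ y + z equals min(1/(4a), 2/(a+3)) · c. -/
/-!
Write `s = y + z`; the objective is `x + s` on the cone `x ≥ s ≥ 0`. Splitting
`x + s = (x - s) + 2 s`, the constraint `p x + q s = p (x - s) + (p + q) s ≥ c` shows that
`x + s ≥ min (1 / p) (2 / (p + q)) * c`, and the two vertices `(x, s) = (c / p, 0)` and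
`(c / (p + q), c / (p + q))` attain the two values in the minimum.
-/

lemma min_div_mul_le_add {p q c x s : ℝ} (hp : 0 < p) (hpq : 0 < p + q) (hs : 0 ≤ s)
    (hsx : s ≤ x) (hcon : c ≤ p * x + q * s) : min (1 / p) (2 / (p + q)) * c ≤ x + s := by
  set m := min (1 / p) (2 / (p + q))
  have hm : 0 ≤ m := le_min (by positivity) (by positivity)
  have hmp : m * p ≤ 1 := (le_div_iff₀ hp).1 (min_le_left _ _)
  have hmpq : m * (p + q) ≤ 2 := (le_div_iff₀ hpq).1 (min_le_right _ _)
  calc m * c ≤ m * (p * x + q * s) := mul_le_mul_of_nonneg_left hcon hm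
    _ = m * p * (x - s) + m * (p + q) * s := by ring
    _ ≤ 1 * (x - s) + 2 * s :=
      add_le_add (mul_le_mul_of_nonneg_right hmp (sub_nonneg.2 hsx))
        (mul_le_mul_of_nonneg_right hmpq hs)
    _ = x + s := by ring

theorem isLeast_min_div_mul {p q c : ℝ} (hp : 0 < p) (hpq : 0 < p + q) (hc : 0 ≤ c) :
    IsLeast {t : ℝ | ∃ x y z : ℝ, 0 ≤ x ∧ 0 ≤ y ∧ 0 ≤ z ∧
        p * x + q * (y + z) ≥ c ∧ x ≥ y + z ∧ t = x + y + z}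
      (min (1 / p) (2 / (p + q)) * c) := by
  refine ⟨?_, ?_⟩
  · rcases min_choice (1 / p) (2 / (p + q)) with h | h <;> rw [h]
    · exact ⟨c / p, 0, 0, by positivity, le_rfl, le_rfl, ge_of_eq (by field_simp; ring),
        by simp; positivity, by ring⟩
    · exact ⟨c / (p + q), c / (p + q), 0, by positivity, by positivity, le_rfl,
        ge_of_eq (by field_simp; ring), by simp, by ring⟩
  · rintro t ⟨x, y, z, -, hy, hz, hcon, hyzx, rfl⟩
    rw [add_assoc]
    exact min_div_mul_le_add hp hpq (add_nonneg hy hz) hyzx (by linarith)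

theorem stmt_2_general (a c : ℝ) (ha : 0 < a) (hc : 0 < c) :
    sInf {t : ℝ | ∃ x y z : ℝ, 0 ≤ x ∧ 0 ≤ y ∧ 0 ≤ z ∧
        4 * a * x + 3 * (1 - a) * (y + z) ≥ c ∧ x ≥ y + z ∧ t = x + y + z}
      = min (1 / (4 * a)) (2 / (a + 3)) * c := by
  have hsum : 4 * a + 3 * (1 - a) = a + 3 := by ring
  have h := isLeast_min_div_mul (q := 3 * (1 - a)) (by positivity : 0 < 4 * a)
    (by rw [hsum]; positivity) hc.le
  rw [hsum] at h
  exact h.csInf_eq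

theorem stmt_2 (a c : ℝ) (ha : 0 < a) (ha1 : a < 1) (hc : 0 < c) :
    sInf {t : ℝ | ∃ x y z : ℝ, 0 ≤ x ∧ 0 ≤ y ∧ 0 ≤ z ∧
        4 * a * x + 3 * (1 - a) * (y + z) ≥ c ∧ x ≥ y + z ∧ t = x + y + z}
      = min (1 / (4 * a)) (2 / (a + 3)) * c :=
  stmt_2_general a c ha hc
end

section
/- Let a ∈ (0,1) and c > 0. Then the infimum of 3u + x + z over all nonnegative reals u, x, z satisfying 3(1−a)·u + 4a·(x+z) ≥ c and u ≤ x equals min(1/(4a), 4/(a+3)) · c. -/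
/-!
Weak duality with two dual certificates. If `5a ≥ 1`, the constraint alone gives
`c ≤ 3(1-a)u + 4a(x+z) ≤ 4a(3u+x+z)`, attained at `(u,x,z) = (0, 0, c/(4a))`. If `5a ≤ 1`,
adding the multiple `3 - 15a ≥ 0` of `x - u ≥ 0` gives `4c ≤ (a+3)(3u+x+z)`, attained at
`(u,x,z) = (c/(a+3), c/(a+3), 0)`. The threshold `5a = 1` is exactly where
`1/(4a) = 4/(a+3)`.
-/

def outageLPValues (a c : ℝ) : Set ℝ :=
  {t : ℝ | ∃ u x z : ℝ, 0 ≤ u ∧ 0 ≤ x ∧ 0 ≤ z ∧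
    3 * (1 - a) * u + 4 * a * (x + z) ≥ c ∧ u ≤ x ∧ t = 3 * u + x + z}

namespace outageLPValues

variable {a c : ℝ}

theorem le_four_mul_mul_of_one_le {u x z : ℝ} (h5a : 1 ≤ 5 * a) (hu : 0 ≤ u)
    (hcon : c ≤ 3 * (1 - a) * u + 4 * a * (x + z)) : c ≤ 4 * a * (3 * u + x + z) := by
  nlinarith

theorem four_mul_le_of_le_one {u x z : ℝ} (h5a : 5 * a ≤ 1) (hz : 0 ≤ z) (hux : u ≤ x)
    (hcon : c ≤ 3 * (1 - a) * u + 4 * a * (x + z)) : 4 * c ≤ (a + 3) * (3 * u + x + z) := by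
  nlinarith [mul_nonneg (sub_nonneg.2 hux) (by linarith : (0 : ℝ) ≤ 3 - 15 * a),
    mul_nonneg hz (by linarith : (0 : ℝ) ≤ 3 - 15 * a)]

theorem div_four_mul_mem (ha : 0 < a) (hc : 0 ≤ c) : c / (4 * a) ∈ outageLPValues a c :=
  ⟨0, 0, c / (4 * a), le_rfl, le_rfl, by positivity,
    by rw [mul_zero, zero_add, zero_add, mul_div_cancel₀ _ (by positivity)], le_rfl, by ring⟩

theorem four_mul_div_mem (ha : 0 < a) (hc : 0 ≤ c) :
    4 * c / (a + 3) ∈ outageLPValues a c := by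
  have ha3 : a + 3 ≠ 0 := by linarith
  refine ⟨c / (a + 3), c / (a + 3), 0, by positivity, by positivity, le_rfl, ?_, le_rfl, ?_⟩
  · apply le_of_eq
    field_simp
    ring
  · field_simp
    ring

theorem one_div_le_four_div_iff (ha : 0 < a) : 1 / (4 * a) ≤ 4 / (a + 3) ↔ 1 ≤ 5 * a := by
  rw [div_le_div_iff₀ (by positivity) (by positivity)]
  constructor <;> intro h <;> linarith

theorem four_div_le_one_div_iff (ha : 0 < a) : 4 / (a + 3) ≤ 1 / (4 * a) ↔ 5 * a ≤ 1 := by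
  rw [div_le_div_iff₀ (by positivity) (by positivity)]
  constructor <;> intro h <;> linarith

theorem isLeast (ha : 0 < a) (hc : 0 ≤ c) :
    IsLeast (outageLPValues a c) (min (1 / (4 * a)) (4 / (a + 3)) * c) := by
  rcases le_total (1 / (4 * a)) (4 / (a + 3)) with h | h
  · rw [min_eq_left h, one_div_mul_eq_div]
    refine ⟨div_four_mul_mem ha hc, ?_⟩
    rintro _ ⟨u, x, z, hu, -, -, hcon, -, rfl⟩
    rw [div_le_iff₀' (by positivity)]
    exact le_four_mul_mul_of_one_le ((one_div_le_four_div_iff ha).1 h) hu hcon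
  · rw [min_eq_right h, div_mul_eq_mul_div]
    refine ⟨four_mul_div_mem ha hc, ?_⟩
    rintro _ ⟨u, x, z, -, -, hz, hcon, hux, rfl⟩
    rw [div_le_iff₀' (by positivity)]
    exact four_mul_le_of_le_one ((four_div_le_one_div_iff ha).1 h) hz hux hcon

end outageLPValues

theorem stmt_3_general (a c : ℝ) (ha : 0 < a) (hc : 0 < c) :
    sInf {t : ℝ | ∃ u x z : ℝ, 0 ≤ u ∧ 0 ≤ x ∧ 0 ≤ z ∧
        3 * (1 - a) * u + 4 * a * (x + z) ≥ c ∧ u ≤ x ∧ t = 3 * u + x + z}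
      = min (1 / (4 * a)) (4 / (a + 3)) * c :=
  (outageLPValues.isLeast ha hc.le).csInf_eq

theorem stmt_3 (a c : ℝ) (ha : 0 < a) (ha1 : a < 1) (hc : 0 < c) :
    sInf {t : ℝ | ∃ u x z : ℝ, 0 ≤ u ∧ 0 ≤ x ∧ 0 ≤ z ∧
        3 * (1 - a) * u + 4 * a * (x + z) ≥ c ∧ u ≤ x ∧ t = 3 * u + x + z}
      = min (1 / (4 * a)) (4 / (a + 3)) * c :=
  stmt_3_general a c ha hc
end
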